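/- Let S be a set of at least three points in general position in the plane, and let a, b, z ∈ S be distinct points such that z lies on the boundary of the convex hull of S. Then there exists a plane Hamiltonian path on S that contains the segment ab as an edge and starts at z. -/

import Mathlib

open Set
open scoped Classical

noncomputable section

/-- Points in the plane. -/
abbrev Pt : Type := ℝ × ℝ

/-- Orientation determinant of the triple `(a, b, p)`:
positive iff `p` lies strictly to the left of the directed line from `a` to `b`. -/
def det3 (a b p : Pt) : ℝ :=
  (b.1 - a.1) * (p.2 - a.2) - (b.2 - a.2) * (p.1 - a.1)

/-- A finite point set is in general position if no three of its points are collinear. -/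
def GenPos (S : Finset Pt) : Prop :=
  ∀ p ∈ S, ∀ q ∈ S, ∀ r ∈ S,
    p ≠ q → p ≠ r → q ≠ r → ¬ Collinear ℝ ({p, q, r} : Set Pt)

/-- The list of (directed) edges of a polygonal path given by its list of vertices. -/
def edgeList (l : List Pt) : List (Pt × Pt) := l.zip l.tail

/-- The segment `ab` is an edge of the path `l`, i.e. `a` and `b` are consecutive on `l`. -/
def IsEdgeOf (a b : Pt) (l : List Pt) : Prop :=
  (a, b) ∈ edgeList l ∨ (b, a) ∈ edgeList l

/-- `l` is a plane (crossing-free) Hamiltonian path on the point set `S`: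
its vertices are exactly the points of `S`, each visited once, and any two distinct
edges intersect only in common endpoints. -/
def PlanePath (S : Finset Pt) (l : List Pt) : Prop :=
  l.Nodup ∧ l.toFinset = S ∧
  ∀ e ∈ edgeList l, ∀ f ∈ edgeList l, e ≠ f →
    segment ℝ e.1 e.2 ∩ segment ℝ f.1 f.2 ⊆
      (({e.1, e.2} : Set Pt) ∩ ({f.1, f.2} : Set Pt))

/-- Two paths are edge-disjoint: no segment is an edge of both. -/
def EdgeDisjoint (l₁ l₂ : List Pt) : Prop :=
  ∀ x y : Pt, IsEdgeOf x y l₁ → ¬ IsEdgeOf x y l₂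

/-- `p` is a vertex of the boundary of the convex hull of `S`. -/
def HullVertex (S : Finset Pt) (p : Pt) : Prop :=
  p ∈ Set.extremePoints ℝ (convexHull ℝ (S : Set Pt))

/-- `ab` is an edge of the boundary of the convex hull of `S`, i.e. `a` and `b` are
consecutive hull vertices: all other points of `S` lie strictly on one side of line `ab`. -/
def IsHullEdge (S : Finset Pt) (a b : Pt) : Prop :=
  a ∈ S ∧ b ∈ S ∧ a ≠ b ∧
  ((∀ p ∈ S, p ≠ a → p ≠ b → 0 < det3 a b p) ∨
   (∀ p ∈ S, p ≠ a → p ≠ b → det3 a b p < 0))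

/-- The segment `xy` is a bridge over the line through `a` and `b`:
it crosses the line `ℓ(ab)` but not the segment `ab`. -/
def IsBridge (a b x y : Pt) : Prop :=
  det3 a b x * det3 a b y < 0 ∧ segment ℝ x y ∩ segment ℝ a b = ∅

/-- The set of common edges of the two paths is exactly the segment `ab`. -/
def SharesExactly (a b : Pt) (l₁ l₂ : List Pt) : Prop :=
  IsEdgeOf a b l₁ ∧ IsEdgeOf a b l₂ ∧
  ∀ x y : Pt, IsEdgeOf x y l₁ → IsEdgeOf x y l₂ → ({x, y} : Set Pt) = ({a, b} : Set Pt)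

/-!
Split `S` by the line `ab`. A plane path from `z` to `a` through `a` and the points strictly
left of `ab`, followed by the edge `ab` and a plane path starting at `b` through `b` and the
points strictly right of `ab`, is plane: the two halves lie in opposite closed half-planes
and touch the line only at `a` and `b`, where they also meet the segment `ab`.

Each half is built by peeling hull vertices: if `u` is a hull vertex and `w` a hull neighbour
of `u`, all other points lie strictly on one side of `uw`, so the edge `uw` crosses no edge
of a plane path on `S \ {u}` starting at `w`, and `w` is a hull vertex of `S \ {u}`.
-/

lemma det3_self_left (a b : Pt) : det3 a b a = 0 := by simp only [det3]; ring

lemma det3_self_right (a b : Pt) : det3 a b b = 0 := by simp only [det3]; ring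

lemma det3_swap_left (a b p : Pt) : det3 b a p = -det3 a b p := by simp only [det3]; ring

lemma det3_swap_right (u x y : Pt) : det3 u y x = -det3 u x y := by simp only [det3]; ring

lemma det3_add_smul (a b x y : Pt) {s t : ℝ} (h : s + t = 1) :
    det3 a b (s • x + t • y) = s * det3 a b x + t * det3 a b y := by
  obtain rfl : s = 1 - t := by linarith
  simp only [det3, Prod.fst_add, Prod.snd_add, Prod.smul_fst, Prod.smul_snd, smul_eq_mul]
  ring

lemma det3_nonneg_of_mem_segment {a b p q x : Pt} (hp : 0 ≤ det3 a b p) (hq : 0 ≤ det3 a b q)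
    (hx : x ∈ segment ℝ p q) : 0 ≤ det3 a b x := by
  obtain ⟨s, t, hs, ht, hst, rfl⟩ := hx
  rw [det3_add_smul _ _ _ _ hst]
  positivity

lemma det3_eq_zero_of_mem_segment {a b x : Pt} (hx : x ∈ segment ℝ a b) : det3 a b x = 0 := by
  obtain ⟨s, t, -, -, hst, rfl⟩ := hx
  rw [det3_add_smul _ _ _ _ hst, det3_self_left, det3_self_right]
  ring

lemma eq_of_mem_segment_of_det3_eq_zero {a b c p q x : Pt} (hc : det3 a b c = 0)
    (hp : 0 < det3 a b p ∨ p = c) (hq : 0 < det3 a b q ∨ q = c)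
    (hx : x ∈ segment ℝ p q) (hx0 : det3 a b x = 0) : x = c ∧ (p = c ∨ q = c) := by
  obtain ⟨s, t, hs, ht, hst, rfl⟩ := hx
  rw [det3_add_smul _ _ _ _ hst] at hx0
  rcases hp with hp | rfl <;> rcases hq with hq | rfl
  · rcases hs.eq_or_lt with rfl | hs
    · obtain rfl : t = 1 := by linarith
      linarith
    · nlinarith [mul_pos hs hp, mul_nonneg ht hq.le]
  · obtain rfl : s = 0 := by nlinarith
    obtain rfl : t = 1 := by linarith
    simp
  · obtain rfl : t = 0 := by nlinarith
    obtain rfl : s = 1 := by linarith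
    simp
  · simp [← add_smul, hst]

lemma collinear_of_det3_eq_zero {p q r : Pt} (h : det3 p q r = 0) :
    Collinear ℝ ({p, q, r} : Set Pt) := by
  rcases eq_or_ne p q with rfl | hpq
  · simpa using collinear_pair ℝ p r
  have hn : (q.1 - p.1) ^ 2 + (q.2 - p.2) ^ 2 ≠ 0 := by
    intro h0
    exact hpq (Prod.ext (by nlinarith) (by nlinarith))
  -- `r` is the orthogonal projection of itself onto the line `pq`
  have hr : AffineMap.lineMap p q
      (((r.1 - p.1) * (q.1 - p.1) + (r.2 - p.2) * (q.2 - p.2)) /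
        ((q.1 - p.1) ^ 2 + (q.2 - p.2) ^ 2)) = r := by
    simp only [det3] at h
    ext <;> simp only [AffineMap.lineMap_apply_module', Prod.fst_add, Prod.snd_add,
      Prod.smul_fst, Prod.smul_snd, Prod.fst_sub, Prod.snd_sub, smul_eq_mul] <;>
      field_simp
    · linear_combination (q.2 - p.2) * h
    · linear_combination (p.1 - q.1) * h
  have := collinear_insert_of_mem_affineSpan_pair (k := ℝ)
    (hr ▸ AffineMap.lineMap_mem_affineSpan_pair _ p q)
  rwa [Set.insert_comm, Set.pair_comm] at this

lemma GenPos.det3_ne_zero {S : Finset Pt} (hgp : GenPos S) {p q r : Pt}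
    (hp : p ∈ S) (hq : q ∈ S) (hr : r ∈ S) (hpq : p ≠ q) (hpr : p ≠ r) (hqr : q ≠ r) :
    det3 p q r ≠ 0 :=
  fun h => hgp p hp q hq r hr hpq hpr hqr (collinear_of_det3_eq_zero h)

lemma GenPos.mono {S T : Finset Pt} (h : GenPos S) (hT : T ⊆ S) : GenPos T :=
  fun p hp q hq r hr => h p (hT hp) q (hT hq) r (hT hr)

/-- For finite `S` these are exactly the vertices of the convex hull. -/
def StrictlySupported (S : Finset Pt) (u : Pt) : Prop :=
  ∃ a b : Pt, det3 a b u = 0 ∧ ∀ p ∈ S, p ≠ u → 0 < det3 a b p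

lemma StrictlySupported.mono {S T : Finset Pt} {u : Pt} (h : StrictlySupported S u)
    (hT : T ⊆ S) : StrictlySupported T u := by
  obtain ⟨a, b, hu, hS⟩ := h
  exact ⟨a, b, hu, fun p hp => hS p (hT hp)⟩

lemma strictlySupported_of_hullVertex {S : Finset Pt} {z : Pt} (hz : z ∈ S)
    (hzv : HullVertex S z) : StrictlySupported S z := by
  set C := convexHull ℝ ((S.erase z : Finset Pt) : Set Pt)
  have hsub : ∀ p ∈ S, p ≠ z → p ∈ C := fun p hp hpz =>
    subset_convexHull ℝ _ (by simp [hp, hpz])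
  have hzC : z ∉ C := by
    intro hmem
    have hCeq : convexHull ℝ (S : Set Pt) = C := by
      refine le_antisymm (convexHull_min ?_ (convex_convexHull ℝ _))
        (convexHull_mono (by simp))
      intro p hp
      rcases eq_or_ne p z with rfl | hpz
      · exact hmem
      · exact hsub p hp hpz
    have := extremePoints_convexHull_subset (show z ∈ Set.extremePoints ℝ C from hCeq ▸ hzv)
    simp at this
  obtain ⟨f, s, hfs, hsz⟩ := geometric_hahn_banach_closed_point (convex_convexHull ℝ _)
    ((S.erase z).finite_toSet.isClosed_convexHull (𝕜 := ℝ)) hzC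
  have hf : ∀ v : Pt, f v = v.1 * f (1, 0) + v.2 * f (0, 1) := by
    intro v
    have hv : v = v.1 • ((1 : ℝ), (0 : ℝ)) + v.2 • ((0 : ℝ), (1 : ℝ)) := by ext <;> simp
    nth_rw 1 [hv]
    rw [map_add, map_smul, map_smul, smul_eq_mul, smul_eq_mul]
  refine ⟨z, z + (-f (0, 1), f (1, 0)), by simp [det3], fun p hp hpz => ?_⟩
  have : det3 z (z + (-f (0, 1), f (1, 0))) p = f z - f p := by
    rw [hf z, hf p]
    simp only [det3, Prod.fst_add, Prod.snd_add]
    ring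
  linarith [hfs p (hsub p hp hpz)]

lemma Finset.exists_forall_rel_of_trans {α : Type*} {T : Finset α} (hT : T.Nonempty)
    {r : α → α → Prop}
    (htrans : ∀ x ∈ T, ∀ y ∈ T, ∀ z ∈ T, r x y → r y z → r x z)
    (htotal : ∀ x ∈ T, ∀ y ∈ T, x ≠ y → r x y ∨ r y x) :
    ∃ w ∈ T, ∀ p ∈ T, p ≠ w → r w p := by
  induction hT using Finset.Nonempty.cons_induction with
  | singleton a => exact ⟨a, by simp, fun p hp hpa => absurd (Finset.mem_singleton.1 hp) hpa⟩
  | cons a T ha hT ih =>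
    simp only [Finset.mem_cons, forall_eq_or_imp] at htrans htotal ⊢
    obtain ⟨w, hwT, hw⟩ := ih (fun x hx y hy z hz => htrans.2 x hx |>.2 y hy |>.2 z hz)
      (fun x hx y hy => htotal.2 x hx |>.2 y hy)
    have haw : a ≠ w := fun h => ha (h ▸ hwT)
    rcases htotal.1.2 w hwT haw with haw' | hwa
    · refine ⟨a, Or.inl rfl, fun h => absurd rfl h, fun p hp hpa => ?_⟩
      rcases eq_or_ne p w with rfl | hpw
      · exact haw'
      · exact htrans.1.2 w hwT |>.2 p hp haw' (hw p hp hpw)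
    · exact ⟨w, Or.inr hwT, fun _ => hwa, hw⟩

/-- Angular order around `u` is transitive within an open half-plane bounded by a line
through `u`. -/
lemma det3_pos_trans {a b u x y p : Pt} (hu : det3 a b u = 0) (hx : 0 < det3 a b x)
    (hy : 0 < det3 a b y) (hp : 0 < det3 a b p) (hxy : 0 < det3 u x y) (hyp : 0 < det3 u y p) :
    0 < det3 u x p := by
  have key : det3 u x p * det3 a b y = det3 u x y * det3 a b p + det3 u y p * det3 a b x := by
    linear_combination (norm := (simp only [det3]; ring))
      (det3 u x p - det3 u x y - det3 u y p) * hu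
  exact pos_of_mul_pos_left (key ▸ by positivity) hy.le

/-- `w₁` and `w₂` are the first and last points in the angular order around `u`, i.e. the two
hull neighbours of `u`. -/
lemma StrictlySupported.exists_extreme_rays {S : Finset Pt} {u : Pt} (hgp : GenPos S)
    (hu : u ∈ S) (hsupp : StrictlySupported S u) (hne : (S.erase u).Nonempty) :
    ∃ w₁ ∈ S.erase u, ∃ w₂ ∈ S.erase u,
      (∀ p ∈ S.erase u, p ≠ w₁ → 0 < det3 u w₁ p) ∧
      (∀ p ∈ S.erase u, p ≠ w₂ → 0 < det3 u p w₂) := by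
  obtain ⟨a, b, hab, hpos⟩ := hsupp
  have hpos' : ∀ p ∈ S.erase u, 0 < det3 a b p := fun p hp =>
    hpos p (Finset.mem_of_mem_erase hp) (Finset.ne_of_mem_erase hp)
  have htrans : ∀ x ∈ S.erase u, ∀ y ∈ S.erase u, ∀ p ∈ S.erase u,
      0 < det3 u x y → 0 < det3 u y p → 0 < det3 u x p := fun x hx y hy p hp =>
    det3_pos_trans hab (hpos' x hx) (hpos' y hy) (hpos' p hp)
  have htotal : ∀ x ∈ S.erase u, ∀ y ∈ S.erase u, x ≠ y →
      0 < det3 u x y ∨ 0 < det3 u y x := by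
    intro x hx y hy hxy
    have := hgp.det3_ne_zero hu (Finset.mem_of_mem_erase hx) (Finset.mem_of_mem_erase hy)
      (Finset.ne_of_mem_erase hx).symm (Finset.ne_of_mem_erase hy).symm hxy
    rw [det3_swap_right u x y]
    rcases this.lt_or_gt with h | h
    · exact Or.inr (neg_pos.2 h)
    · exact Or.inl h
  obtain ⟨w₁, hw₁, h₁⟩ := Finset.exists_forall_rel_of_trans hne htrans htotal
  obtain ⟨w₂, hw₂, h₂⟩ :=
    Finset.exists_forall_rel_of_trans (r := fun x y => 0 < det3 u y x) hne
    (fun x hx y hy p hp hxy hyp => htrans p hp y hy x hx hyp hxy)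
    (fun x hx y hy hxy => (htotal x hx y hy hxy).symm)
  exact ⟨w₁, hw₁, w₂, hw₂, h₁, h₂⟩

lemma isHullEdge_of_forall_det3_pos {S : Finset Pt} {u w : Pt} (hu : u ∈ S) (hw : w ∈ S.erase u)
    (h : ∀ p ∈ S.erase u, p ≠ w → 0 < det3 u w p) : IsHullEdge S u w :=
  ⟨hu, Finset.mem_of_mem_erase hw, (Finset.ne_of_mem_erase hw).symm,
    Or.inl fun p hp hpu hpw => h p (Finset.mem_erase.2 ⟨hpu, hp⟩) hpw⟩

lemma isHullEdge_of_forall_det3_neg {S : Finset Pt} {u w : Pt} (hu : u ∈ S) (hw : w ∈ S.erase u)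
    (h : ∀ p ∈ S.erase u, p ≠ w → 0 < det3 u p w) : IsHullEdge S u w :=
  ⟨hu, Finset.mem_of_mem_erase hw, (Finset.ne_of_mem_erase hw).symm,
    Or.inr fun p hp hpu hpw => by
      linarith [h p (Finset.mem_erase.2 ⟨hpu, hp⟩) hpw, det3_swap_right u p w]⟩

lemma StrictlySupported.exists_isHullEdge {S : Finset Pt} {u : Pt} (hgp : GenPos S)
    (hu : u ∈ S) (hsupp : StrictlySupported S u) (hne : (S.erase u).Nonempty) :
    ∃ w, IsHullEdge S u w := by
  obtain ⟨w, hw, -, -, hpos, -⟩ := hsupp.exists_extreme_rays hgp hu hne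
  exact ⟨w, isHullEdge_of_forall_det3_pos hu hw hpos⟩

lemma StrictlySupported.exists_isHullEdge_ne {S : Finset Pt} {u : Pt} (hgp : GenPos S)
    (hu : u ∈ S) (hsupp : StrictlySupported S u) (hcard : 3 ≤ S.card) (v : Pt) :
    ∃ w, w ≠ v ∧ IsHullEdge S u w := by
  have hcard' : 2 ≤ (S.erase u).card := by rw [Finset.card_erase_of_mem hu]; omega
  obtain ⟨w₁, hw₁, w₂, hw₂, h₁, h₂⟩ :=
    hsupp.exists_extreme_rays hgp hu (Finset.card_pos.1 (by omega))
  have hw₁₂ : w₁ ≠ w₂ := by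
    rintro rfl
    obtain ⟨p, hp, hpw⟩ := Finset.exists_mem_ne hcard' w₁
    linarith [h₁ p hp hpw, h₂ p hp hpw, det3_swap_right u p w₁]
  by_cases hv : w₁ = v
  · exact ⟨w₂, hv ▸ hw₁₂.symm, isHullEdge_of_forall_det3_neg hu hw₂ h₂⟩
  · exact ⟨w₁, hv, isHullEdge_of_forall_det3_pos hu hw₁ h₁⟩

lemma IsHullEdge.mem_erase {S : Finset Pt} {u w : Pt} (h : IsHullEdge S u w) : w ∈ S.erase u :=
  Finset.mem_erase.2 ⟨h.2.2.1.symm, h.2.1⟩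

lemma IsHullEdge.strictlySupported_erase {S : Finset Pt} {u w : Pt} (h : IsHullEdge S u w) :
    StrictlySupported (S.erase u) w := by
  obtain ⟨-, -, -, hpos | hneg⟩ := h
  · exact ⟨u, w, det3_self_right u w, fun p hp hpw =>
      hpos p (Finset.mem_of_mem_erase hp) (Finset.ne_of_mem_erase hp) hpw⟩
  · exact ⟨w, u, det3_self_left w u, fun p hp hpw => by
      linarith [hneg p (Finset.mem_of_mem_erase hp) (Finset.ne_of_mem_erase hp) hpw,
        det3_swap_left u w p]⟩

/-- The crossing-freeness condition of `PlanePath` for one pair of edges. -/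
def Noncrossing (e f : Pt × Pt) : Prop :=
  segment ℝ e.1 e.2 ∩ segment ℝ f.1 f.2 ⊆ ({e.1, e.2} : Set Pt) ∩ {f.1, f.2}

lemma Noncrossing.symm {e f : Pt × Pt} (h : Noncrossing e f) : Noncrossing f e := by
  intro x hx
  exact (h hx.symm).symm

lemma Noncrossing.of_swap {a b : Pt} {f : Pt × Pt} (h : Noncrossing (b, a) f) :
    Noncrossing (a, b) f := by
  simpa only [Noncrossing, segment_symm ℝ b a, Set.pair_comm b a] using h

lemma noncrossing_of_det3_pos_or_eq {a b c p q : Pt} (hc : c = a ∨ c = b)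
    (hp : 0 < det3 a b p ∨ p = c) (hq : 0 < det3 a b q ∨ q = c) :
    Noncrossing (a, b) (p, q) := by
  rintro x ⟨hxab, hxpq⟩
  have hc0 : det3 a b c = 0 := by
    rcases hc with rfl | rfl
    exacts [det3_self_left _ _, det3_self_right _ _]
  obtain ⟨rfl, hpq⟩ :=
    eq_of_mem_segment_of_det3_eq_zero hc0 hp hq hxpq (det3_eq_zero_of_mem_segment hxab)
  constructor
  · rcases hc with rfl | rfl <;> simp
  · rcases hpq with rfl | rfl <;> simp

lemma noncrossing_of_opposite_sides {a b p q r s : Pt} (hab : a ≠ b)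
    (hp : 0 < det3 a b p ∨ p = a) (hq : 0 < det3 a b q ∨ q = a)
    (hr : 0 < det3 b a r ∨ r = b) (hs : 0 < det3 b a s ∨ s = b) :
    Noncrossing (p, q) (r, s) := by
  have hnonneg : ∀ {a b p}, 0 < det3 a b p ∨ p = a → 0 ≤ det3 a b p := by
    rintro a b p (h | rfl)
    exacts [h.le, (det3_self_left _ _).ge]
  rintro x ⟨hxpq, hxrs⟩
  have hx₁ := det3_nonneg_of_mem_segment (hnonneg hp) (hnonneg hq) hxpq
  have hx₂ := det3_nonneg_of_mem_segment (hnonneg hr) (hnonneg hs) hxrs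
  rw [det3_swap_left] at hx₂
  have hxa := eq_of_mem_segment_of_det3_eq_zero (det3_self_left a b) hp hq hxpq (by linarith)
  have hxb := eq_of_mem_segment_of_det3_eq_zero (det3_self_left b a) hr hs hxrs
    (by rw [det3_swap_left]; linarith)
  exact absurd (hxa.1.symm.trans hxb.1) hab

lemma mem_of_mem_edgeList {l : List Pt} {e : Pt × Pt} (h : e ∈ edgeList l) :
    e.1 ∈ l ∧ e.2 ∈ l :=
  ⟨(List.of_mem_zip h).1, List.mem_of_mem_tail (List.of_mem_zip h).2⟩

lemma edgeList_append {l₁ l₂ : List Pt} {x y : Pt}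
    (h₁ : l₁.getLast? = some x) (h₂ : l₂.head? = some y) :
    edgeList (l₁ ++ l₂) = edgeList l₁ ++ (x, y) :: edgeList l₂ := by
  induction l₁ with
  | nil => simp at h₁
  | cons a t ih =>
    cases t with
    | nil =>
      obtain rfl : a = x := by simpa using h₁
      cases l₂ with
      | nil => simp at h₂
      | cons y' t₂ =>
        obtain rfl : y' = y := by simpa using h₂
        rfl
    | cons b t' =>
      rw [List.getLast?_cons_cons] at h₁
      simp only [edgeList, List.cons_append, List.tail_cons, List.zip_cons_cons] at ih ⊢
      rw [ih h₁]

lemma PlanePath.mem_of_mem_edgeList {S : Finset Pt} {l : List Pt} (h : PlanePath S l)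
    {e : Pt × Pt} (he : e ∈ edgeList l) : e.1 ∈ S ∧ e.2 ∈ S := by
  rw [← h.2.1, List.mem_toFinset, List.mem_toFinset]
  exact _root_.mem_of_mem_edgeList he

lemma planePath_singleton (u : Pt) : PlanePath {u} [u] :=
  ⟨List.nodup_singleton u, rfl, by simp [edgeList]⟩

lemma PlanePath.append {S₁ S₂ : Finset Pt} {l₁ l₂ : List Pt} {x y : Pt}
    (h₁ : PlanePath S₁ l₁) (h₂ : PlanePath S₂ l₂) (hdisj : Disjoint S₁ S₂)
    (hx : l₁.getLast? = some x) (hy : l₂.head? = some y)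
    (hxy₁ : ∀ e ∈ edgeList l₁, Noncrossing (x, y) e)
    (hxy₂ : ∀ e ∈ edgeList l₂, Noncrossing (x, y) e)
    (h₁₂ : ∀ e ∈ edgeList l₁, ∀ f ∈ edgeList l₂, Noncrossing e f) :
    PlanePath (S₁ ∪ S₂) (l₁ ++ l₂) := by
  obtain ⟨hnd₁, rfl, hcr₁⟩ := h₁
  obtain ⟨hnd₂, rfl, hcr₂⟩ := h₂
  refine ⟨List.nodup_append.2 ⟨hnd₁, hnd₂, fun p hp q hq hpq => ?_⟩,
    List.toFinset_append, ?_⟩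
  · exact Finset.disjoint_left.1 hdisj (List.mem_toFinset.2 hp) (hpq ▸ List.mem_toFinset.2 hq)
  have hmem : ∀ e ∈ edgeList (l₁ ++ l₂),
      e ∈ edgeList l₁ ∨ e = (x, y) ∨ e ∈ edgeList l₂ := by
    simp [edgeList_append hx hy]
  intro e he f hf hef
  rcases hmem e he with he | rfl | he <;> rcases hmem f hf with hf | rfl | hf
  · exact hcr₁ e he f hf hef
  · exact (hxy₁ e he).symm
  · exact h₁₂ e he f hf
  · exact hxy₁ f hf
  · exact absurd rfl hef
  · exact hxy₂ f hf
  · exact (h₁₂ f hf e he).symm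
  · exact (hxy₂ e he).symm
  · exact hcr₂ e he f hf hef

lemma PlanePath.cons_of_isHullEdge {S : Finset Pt} {u w : Pt} {l : List Pt}
    (hl : PlanePath (S.erase u) l) (hw : l.head? = some w) (huw : IsHullEdge S u w) :
    PlanePath S (u :: l) := by
  obtain ⟨hu, -, -, hside⟩ := huw
  have hl' : ∀ p ∈ l, p ∈ S ∧ p ≠ u := fun p hp => by
    have := hl.2.1 ▸ List.mem_toFinset.2 hp
    exact ⟨Finset.mem_of_mem_erase this, Finset.ne_of_mem_erase this⟩
  have hfirst : ∀ e ∈ edgeList l, Noncrossing (u, w) e := by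
    intro e he
    obtain ⟨he₁, he₂⟩ := _root_.mem_of_mem_edgeList he
    rcases hside with hpos | hneg
    · have hleft : ∀ p ∈ l, 0 < det3 u w p ∨ p = w := fun p hp =>
        or_iff_not_imp_right.2 (hpos p (hl' p hp).1 (hl' p hp).2)
      exact noncrossing_of_det3_pos_or_eq (Or.inr rfl) (hleft _ he₁) (hleft _ he₂)
    · have hleft : ∀ p ∈ l, 0 < det3 w u p ∨ p = w := fun p hp =>
        or_iff_not_imp_right.2 fun hpw => by
          linarith [hneg p (hl' p hp).1 (hl' p hp).2 hpw, det3_swap_left u w p]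
      exact (noncrossing_of_det3_pos_or_eq (Or.inl rfl) (hleft _ he₁) (hleft _ he₂)).of_swap
  have := (planePath_singleton u).append hl (by simp) rfl hw (by simp [edgeList]) hfirst
    (by simp [edgeList])
  rwa [← Finset.insert_eq, Finset.insert_erase hu] at this

theorem exists_planePath_head {S : Finset Pt} (hgp : GenPos S) {u : Pt} (hu : u ∈ S)
    (hsupp : StrictlySupported S u) : ∃ l, PlanePath S l ∧ l.head? = some u := by
  induction S using Finset.strongInduction generalizing u with
  | H S ih =>
  rcases (S.erase u).eq_empty_or_nonempty with hS | hne
  · rw [← Finset.insert_erase hu, hS]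
    exact ⟨[u], planePath_singleton u, rfl⟩
  obtain ⟨w, huw⟩ := hsupp.exists_isHullEdge hgp hu hne
  obtain ⟨l, hl, hw⟩ := ih _ (Finset.erase_ssubset hu) (hgp.mono (Finset.erase_subset u S))
    huw.mem_erase huw.strictlySupported_erase
  exact ⟨u :: l, hl.cons_of_isHullEdge hw huw, rfl⟩

/-- As long as three points remain, one of the two hull edges at `u` avoids `v`, so both
endpoints stay strictly supported. -/
theorem exists_planePath_head_getLast {S : Finset Pt} (hgp : GenPos S) {u v : Pt} (hu : u ∈ S)
    (hv : v ∈ S) (huv : u ≠ v) (hsu : StrictlySupported S u) (hsv : StrictlySupported S v) :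
    ∃ l, PlanePath S l ∧ l.head? = some u ∧ l.getLast? = some v := by
  induction S using Finset.strongInduction generalizing u with
  | H S ih =>
  have hv' : v ∈ S.erase u := Finset.mem_erase.2 ⟨huv.symm, hv⟩
  by_cases hcard : S.card = 2
  · obtain ⟨x, hx⟩ := Finset.card_eq_one.1 (by rw [Finset.card_erase_of_mem hu, hcard])
    obtain rfl : v = x := Finset.mem_singleton.1 (hx ▸ hv')
    refine ⟨[u, v], PlanePath.cons_of_isHullEdge (hx ▸ planePath_singleton v) rfl
      ⟨hu, hv, huv, Or.inl fun p hp hpu hpv => ?_⟩, rfl, rfl⟩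
    exact absurd (Finset.mem_singleton.1 (hx ▸ Finset.mem_erase.2 ⟨hpu, hp⟩)) hpv
  have hcard3 : 3 ≤ S.card := by
    have := Finset.one_lt_card.2 ⟨u, hu, v, hv, huv⟩
    omega
  obtain ⟨w, hwv, huw⟩ := hsu.exists_isHullEdge_ne hgp hu hcard3 v
  obtain ⟨l, hl, hw, hlast⟩ := ih _ (Finset.erase_ssubset hu)
    (hgp.mono (Finset.erase_subset u S)) huw.mem_erase hv' hwv huw.strictlySupported_erase
    (hsv.mono (Finset.erase_subset u S))
  exact ⟨u :: l, hl.cons_of_isHullEdge hw huw, rfl, by simp [List.getLast?_cons, hlast]⟩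

def leftPart (S : Finset Pt) (a b : Pt) : Finset Pt :=
  insert a (S.filter fun p => 0 < det3 a b p)

section leftPart

variable {S : Finset Pt} {a b p : Pt}

lemma leftPart_subset (ha : a ∈ S) : leftPart S a b ⊆ S :=
  Finset.insert_subset ha (Finset.filter_subset _ _)

lemma mem_leftPart_of_det3_pos (hp : p ∈ S) (h : 0 < det3 a b p) : p ∈ leftPart S a b :=
  Finset.mem_insert_of_mem (Finset.mem_filter.2 ⟨hp, h⟩)

lemma det3_pos_or_eq_of_mem_leftPart (hp : p ∈ leftPart S a b) : 0 < det3 a b p ∨ p = a := by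
  rcases Finset.mem_insert.1 hp with rfl | hp
  exacts [Or.inr rfl, Or.inl (Finset.mem_filter.1 hp).2]

lemma strictlySupported_leftPart : StrictlySupported (leftPart S a b) a :=
  ⟨a, b, det3_self_left a b, fun _ hp hpa =>
    (det3_pos_or_eq_of_mem_leftPart hp).resolve_right hpa⟩

lemma leftPart_union_leftPart (hgp : GenPos S) (ha : a ∈ S) (hb : b ∈ S) (hab : a ≠ b) :
    leftPart S a b ∪ leftPart S b a = S := by
  refine Finset.Subset.antisymm (Finset.union_subset (leftPart_subset ha) (leftPart_subset hb))
    fun p hp => ?_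
  rcases eq_or_ne a p with rfl | hap
  · exact Finset.mem_union_left _ (Finset.mem_insert_self _ _)
  rcases eq_or_ne b p with rfl | hbp
  · exact Finset.mem_union_right _ (Finset.mem_insert_self _ _)
  rcases (hgp.det3_ne_zero ha hb hp hab hap hbp).lt_or_gt with h | h
  · rw [← neg_pos, ← det3_swap_left] at h
    exact Finset.mem_union_right _ (mem_leftPart_of_det3_pos hp h)
  · exact Finset.mem_union_left _ (mem_leftPart_of_det3_pos hp h)

lemma disjoint_leftPart (hab : a ≠ b) : Disjoint (leftPart S a b) (leftPart S b a) := by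
  refine Finset.disjoint_left.2 fun p hpa hpb => ?_
  rcases det3_pos_or_eq_of_mem_leftPart hpa with h₁ | rfl <;>
    rcases det3_pos_or_eq_of_mem_leftPart hpb with h₂ | rfl
  · linarith [det3_swap_left a b p]
  · linarith [det3_self_right a p]
  · linarith [det3_self_right b p]
  · exact hab rfl

end leftPart

theorem exists_planePath_of_det3_pos {S : Finset Pt} (hgp : GenPos S) {a b z : Pt} (ha : a ∈ S)
    (hb : b ∈ S) (hz : z ∈ S) (hab : a ≠ b) (hsupp : StrictlySupported S z)
    (hzab : 0 < det3 a b z) :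
    ∃ l, PlanePath S l ∧ (a, b) ∈ edgeList l ∧ l.head? = some z := by
  have hza : z ≠ a := by rintro rfl; simp [det3_self_left] at hzab
  obtain ⟨l₁, hl₁, hhead₁, hlast₁⟩ := exists_planePath_head_getLast
    (hgp.mono (leftPart_subset ha)) (mem_leftPart_of_det3_pos hz hzab)
    (Finset.mem_insert_self a _) hza (hsupp.mono (leftPart_subset ha)) strictlySupported_leftPart
  obtain ⟨l₂, hl₂, hhead₂⟩ := exists_planePath_head (hgp.mono (leftPart_subset hb))
    (Finset.mem_insert_self b _) strictlySupported_leftPart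
  have side₁ : ∀ e ∈ edgeList l₁,
      (0 < det3 a b e.1 ∨ e.1 = a) ∧ (0 < det3 a b e.2 ∨ e.2 = a) :=
    fun e he => (hl₁.mem_of_mem_edgeList he).imp det3_pos_or_eq_of_mem_leftPart
      det3_pos_or_eq_of_mem_leftPart
  have side₂ : ∀ e ∈ edgeList l₂,
      (0 < det3 b a e.1 ∨ e.1 = b) ∧ (0 < det3 b a e.2 ∨ e.2 = b) :=
    fun e he => (hl₂.mem_of_mem_edgeList he).imp det3_pos_or_eq_of_mem_leftPart
      det3_pos_or_eq_of_mem_leftPart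
  have hl := hl₁.append hl₂ (disjoint_leftPart hab) hlast₁ hhead₂
    (fun e he => noncrossing_of_det3_pos_or_eq (Or.inl rfl) (side₁ e he).1 (side₁ e he).2)
    (fun e he =>
      (noncrossing_of_det3_pos_or_eq (Or.inl rfl) (side₂ e he).1 (side₂ e he).2).of_swap)
    (fun e he f hf => noncrossing_of_opposite_sides hab (side₁ e he).1 (side₁ e he).2
      (side₂ f hf).1 (side₂ f hf).2)
  rw [leftPart_union_leftPart hgp ha hb hab] at hl
  refine ⟨l₁ ++ l₂, hl, by simp [edgeList_append hlast₁ hhead₂], ?_⟩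
  simp [List.head?_append, hhead₁]

theorem stmt_2_general (S : Finset Pt) (hgp : GenPos S)
    (a b z : Pt) (ha : a ∈ S) (hb : b ∈ S) (hz : z ∈ S)
    (hab : a ≠ b) (haz : a ≠ z) (hbz : b ≠ z)
    (hzv : HullVertex S z) :
    ∃ l : List Pt, PlanePath S l ∧ IsEdgeOf a b l ∧ l.head? = some z := by
  have hsupp := strictlySupported_of_hullVertex hz hzv
  rcases (hgp.det3_ne_zero ha hb hz hab haz hbz).lt_or_gt with hneg | hpos
  · rw [← neg_pos, ← det3_swap_left] at hneg
    obtain ⟨l, hl, hba, hhead⟩ := exists_planePath_of_det3_pos hgp hb ha hz hab.symm hsupp hneg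
    exact ⟨l, hl, Or.inr hba, hhead⟩
  · obtain ⟨l, hl, hab', hhead⟩ := exists_planePath_of_det3_pos hgp ha hb hz hab hsupp hpos
    exact ⟨l, hl, Or.inl hab', hhead⟩

/-- On a set of at least 3 points in general position, for distinct
`a, b, z ∈ S` with `z` a hull vertex, there is a plane Hamiltonian path containing
the segment `ab` as an edge and starting at `z`. -/
theorem stmt_2 (S : Finset Pt) (hcard : 3 ≤ S.card) (hgp : GenPos S)
    (a b z : Pt) (ha : a ∈ S) (hb : b ∈ S) (hz : z ∈ S)
    (hab : a ≠ b) (haz : a ≠ z) (hbz : b ≠ z)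
    (hzv : HullVertex S z) :
    ∃ l : List Pt, PlanePath S l ∧ IsEdgeOf a b l ∧ l.head? = some z :=
  stmt_2_general S hgp a b z ha hb hz hab haz hbz hzv
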